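/- arXiv:2506.12177 — 2 statements merged into one kernel-verified Lean document; each statement's English description precedes it below -/
import Mathlib

section
/- Suppose E[Y(a) | U, X] = τ(a, X)' g(U, X) for each a, and Y(a) ⫫ Z | (U, X). Then E[Y(a) | Z, X] = τ(a, X)' E[g(U, X) | Z, X] almost surely, and hence the CATE satisfies E[Y(a₁) − Y(a₀) | Z, X] = (τ(a₁, X) − τ(a₀, X))' E[g(U, X) | Z, X]. -/
/-!
Conditioning on `((U, X), Z)` and then on `(Z, X)`, the tower property reduces `E[Y(a) | Z, X]`
to `E[E[Y(a) | (U, X), Z] | Z, X]`; conditional independence lets us drop `Z` from the inner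
conditioning, and the outcome model turns the inner expectation into `τ(a, X)' g(U, X)`. Since
`X` is a function of `(Z, X)`, the factor `τ(a, X)` comes out of the outer expectation. No
measurability of `τ` is assumed, so this last step is done fibrewise with the regular conditional
distribution of `ω` given `(Z, X)`, on almost every fibre of which `X` is constant.
-/

open Matrix MeasureTheory ProbabilityTheory

lemma MeasureTheory.integral_const_dotProduct {α ι : Type*} [Fintype ι] {_ : MeasurableSpace α}
    {ν : Measure α} {G : α → ι → ℝ} (hG : Integrable G ν) (v : ι → ℝ) :
    ∫ x, v ⬝ᵥ G x ∂ν = v ⬝ᵥ ∫ x, G x ∂ν := by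
  simp only [dotProduct]
  rw [integral_finsetSum _ fun i _ => (hG.eval i).const_mul (v i)]
  simp only [integral_const_mul, eval_integral hG.eval]

namespace ProbabilityTheory

variable {Ω : Type*} {mΩ : MeasurableSpace Ω} [StandardBorelSpace Ω] {μ : Measure Ω}
  [IsFiniteMeasure μ]

section condDistribId

variable [Nonempty Ω] {β : Type*} [MeasurableSpace β] {W : Ω → β}

lemma ae_ae_condDistrib_id_of_ae_mem (hW : Measurable W) {S : Set (β × Ω)}
    (hS : MeasurableSet S) (h : ∀ᵐ ω ∂μ, (W ω, ω) ∈ S) :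
    ∀ᵐ ω ∂μ, ∀ᵐ ω' ∂condDistrib id W μ (W ω), (W ω, ω') ∈ S := by
  have h_map : ∀ᵐ x ∂μ.map (fun ω => (W ω, id ω)), x ∈ S :=
    (ae_map_iff (hW.prodMk measurable_id).aemeasurable hS).mpr h
  rw [← compProd_map_condDistrib aemeasurable_id] at h_map
  exact ae_of_ae_map hW.aemeasurable (Measure.ae_ae_of_ae_compProd h_map)

lemma ae_ae_condDistrib_id_eq [MeasurableEq β] (hW : Measurable W) :
    ∀ᵐ ω ∂μ, ∀ᵐ ω' ∂condDistrib id W μ (W ω), W ω' = W ω :=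
  ae_ae_condDistrib_id_of_ae_mem hW (S := {x | W x.2 = x.1})
    (measurableSet_eq_fun (hW.comp measurable_snd) measurable_fst) (ae_of_all _ fun _ => rfl)

lemma ae_ae_condDistrib_id_of_ae (hW : Measurable W) {P : Ω → Prop} (h : ∀ᵐ ω ∂μ, P ω) :
    ∀ᵐ ω ∂μ, ∀ᵐ ω' ∂condDistrib id W μ (W ω), P ω' := by
  set N := toMeasurable μ {ω | ¬P ω}
  have hN : ∀ᵐ ω ∂μ, ω ∉ N := by
    rw [← measure_eq_zero_iff_ae_notMem, measure_toMeasurable]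
    exact h
  filter_upwards [ae_ae_condDistrib_id_of_ae_mem hW (S := Prod.snd ⁻¹' Nᶜ)
    ((measurableSet_toMeasurable _ _).compl.preimage measurable_snd) hN] with ω hω
  filter_upwards [hω] with ω' hω'
  by_contra hP
  exact hω' (subset_toMeasurable _ _ hP)

lemma condExp_comap_ae_eq_dotProduct {ι : Type*} [Fintype ι] [MeasurableEq β]
    (hW : Measurable W) {c : Ω → ℝ} (hc : Integrable c μ) {G : Ω → ι → ℝ}
    (hG : Integrable G μ) (v : β → ι → ℝ) (hcG : c =ᵐ[μ] fun ω => v (W ω) ⬝ᵥ G ω) :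
    μ[c | MeasurableSpace.comap W inferInstance] =ᵐ[μ]
      fun ω => v (W ω) ⬝ᵥ μ[G | MeasurableSpace.comap W inferInstance] ω := by
  filter_upwards [condExp_ae_eq_integral_condDistrib_id hW hc,
    condExp_ae_eq_integral_condDistrib_id hW hG,
    (hG.comp_snd_map_prodMk W).condDistrib_ae hW.aemeasurable aemeasurable_id,
    ae_ae_condDistrib_id_of_ae hW hcG, ae_ae_condDistrib_id_eq hW]
    with ω hcω hGω hGint hcGω hWω
  have hc_const : ∀ᵐ ω' ∂condDistrib id W μ (W ω), c ω' = v (W ω) ⬝ᵥ G ω' := by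
    filter_upwards [hcGω, hWω] with ω' h1 h2
    rw [h1, h2]
  rw [hcω, hGω, integral_congr_ae hc_const, integral_const_dotProduct hGint]

end condDistribId

lemma condExp_comap_prodMk_ae_eq_of_condIndepFun {γ δ : Type*} [MeasurableSpace γ]
    [MeasurableSpace δ] [StandardBorelSpace δ] [Nonempty δ] {k : Ω → γ} (hk : Measurable k)
    {Y : Ω → ℝ} (hY : Measurable Y) (hYint : Integrable Y μ) {Z : Ω → δ} (hZ : Measurable Z)
    (hCI : Y ⟂ᵢ[k, hk; μ] Z) :
    μ[Y | MeasurableSpace.comap (fun ω => (k ω, Z ω)) inferInstance] =ᵐ[μ]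
      μ[Y | MeasurableSpace.comap k inferInstance] := by
  have hcd := (condIndepFun_iff_condDistrib_prod_ae_eq_prodMkRight hY hZ hk).mp hCI.symm
  filter_upwards [condExp_ae_eq_integral_condDistrib' (hk.prodMk hZ) hYint,
    condExp_ae_eq_integral_condDistrib' hk hYint,
    ae_of_ae_map (hk.prodMk hZ).aemeasurable hcd] with ω h1 h2 h3
  rw [h1, h2, h3, Kernel.prodMkRight_apply]

end ProbabilityTheory

theorem stmt9_general {Ω : Type*} [mΩ : MeasurableSpace Ω] [StandardBorelSpace Ω] [Nonempty Ω]
    (μ : Measure Ω) [IsProbabilityMeasure μ]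
    {l k p q : ℕ} (X : Ω → Fin l → ℝ) (U : Ω → Fin k → ℝ) (Z : Ω → Fin p → ℝ)
    (Ypot : ℝ → Ω → ℝ)
    (hX : Measurable X) (hZ : Measurable Z)
    (hYpot : ∀ a, Measurable (Ypot a))
    (g : (Fin k → ℝ) → (Fin l → ℝ) → Fin q → ℝ) (τ : ℝ → (Fin l → ℝ) → Fin q → ℝ)
    (hUXle : MeasurableSpace.comap (fun ω => (U ω, X ω)) inferInstance ≤ mΩ)
    -- the working outcome model `E[Y(a) | U, X] = τ(a, X)' g(U, X)`
    (hmodel : ∀ a : ℝ,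
      μ[Ypot a | MeasurableSpace.comap (fun ω => (U ω, X ω)) inferInstance]
        =ᵐ[μ] fun ω => τ a (X ω) ⬝ᵥ g (U ω) (X ω))
    -- conditional independence `Y(a) ⫫ Z | (U, X)`
    (hCIZ : ∀ a : ℝ, CondIndepFun
      (MeasurableSpace.comap (fun ω => (U ω, X ω)) inferInstance) hUXle (Ypot a) Z μ)
    -- integrability
    (hYpotint : ∀ a, Integrable (Ypot a) μ)
    (hgint : Integrable (fun ω => g (U ω) (X ω)) μ)
    (a₀ a₁ : ℝ) :
    (∀ a : ℝ,
      μ[Ypot a | MeasurableSpace.comap (fun ω => (Z ω, X ω)) inferInstance]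
        =ᵐ[μ] fun ω => τ a (X ω) ⬝ᵥ
          (μ[(fun ω' => g (U ω') (X ω')) |
            MeasurableSpace.comap (fun ω' => (Z ω', X ω')) inferInstance]) ω) ∧
    (μ[(fun ω => Ypot a₁ ω - Ypot a₀ ω) |
        MeasurableSpace.comap (fun ω => (Z ω, X ω)) inferInstance]
      =ᵐ[μ] fun ω => (τ a₁ (X ω) - τ a₀ (X ω)) ⬝ᵥ
        (μ[(fun ω' => g (U ω') (X ω')) |
          MeasurableSpace.comap (fun ω' => (Z ω', X ω')) inferInstance]) ω) := by
  have hUX : Measurable fun ω => (U ω, X ω) := Measurable.of_comap_le hUXle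
  have hUXZ : Measurable fun ω => ((U ω, X ω), Z ω) := hUX.prodMk hZ
  have hZX_le : MeasurableSpace.comap (fun ω => (Z ω, X ω)) inferInstance ≤
      MeasurableSpace.comap (fun ω => ((U ω, X ω), Z ω)) inferInstance :=
    Measurable.comap_le (f := fun ω => (Z ω, X ω))
      ((measurable_snd.prodMk (measurable_snd.comp measurable_fst)).comp (comap_measurable _))
  have h_cate : ∀ a : ℝ,
      μ[Ypot a | MeasurableSpace.comap (fun ω => (Z ω, X ω)) inferInstance]
        =ᵐ[μ] fun ω => τ a (X ω) ⬝ᵥ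
          (μ[(fun ω' => g (U ω') (X ω')) |
            MeasurableSpace.comap (fun ω' => (Z ω', X ω')) inferInstance]) ω := fun a =>
    calc μ[Ypot a | MeasurableSpace.comap (fun ω => (Z ω, X ω)) inferInstance]
        =ᵐ[μ] μ[μ[Ypot a | MeasurableSpace.comap (fun ω => ((U ω, X ω), Z ω)) inferInstance] |
          MeasurableSpace.comap (fun ω => (Z ω, X ω)) inferInstance] :=
          (condExp_condExp_of_le hZX_le hUXZ.comap_le).symm
      _ =ᵐ[μ] μ[μ[Ypot a | MeasurableSpace.comap (fun ω => (U ω, X ω)) inferInstance] |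
          MeasurableSpace.comap (fun ω => (Z ω, X ω)) inferInstance] :=
          condExp_congr_ae (condExp_comap_prodMk_ae_eq_of_condIndepFun hUX (hYpot a)
            (hYpotint a) hZ (hCIZ a))
      _ =ᵐ[μ] _ := condExp_comap_ae_eq_dotProduct (hZ.prodMk hX) integrable_condExp hgint
          (fun zx => τ a zx.2) (hmodel a)
  refine ⟨h_cate, ?_⟩
  filter_upwards [condExp_sub (hYpotint a₁) (hYpotint a₀) _, h_cate a₁, h_cate a₀]
    with ω h_sub h₁ h₀
  rw [← Pi.sub_def, h_sub, Pi.sub_apply, h₁, h₀, sub_dotProduct]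

/-- Suppose `E[Y(a) | U, X] = τ(a, X)' g(U, X)` for each `a`, and `Y(a) ⫫ Z | (U, X)`.
Then `E[Y(a) | Z, X] = τ(a, X)' E[g(U, X) | Z, X]` almost surely, and hence the CATE
satisfies `E[Y(a₁) − Y(a₀) | Z, X] = (τ(a₁, X) − τ(a₀, X))' E[g(U, X) | Z, X]`. -/
theorem stmt9 {Ω : Type*} [mΩ : MeasurableSpace Ω] [StandardBorelSpace Ω] [Nonempty Ω]
    (μ : Measure Ω) [IsProbabilityMeasure μ]
    {l k p q : ℕ} (X : Ω → Fin l → ℝ) (U : Ω → Fin k → ℝ) (Z : Ω → Fin p → ℝ)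
    (Ypot : ℝ → Ω → ℝ)
    (hX : Measurable X) (hU : Measurable U) (hZ : Measurable Z)
    (hYpot : ∀ a, Measurable (Ypot a))
    (g : (Fin k → ℝ) → (Fin l → ℝ) → Fin q → ℝ) (τ : ℝ → (Fin l → ℝ) → Fin q → ℝ)
    (hg : Measurable (fun ux : (Fin k → ℝ) × (Fin l → ℝ) => g ux.1 ux.2))
    (hUXle : MeasurableSpace.comap (fun ω => (U ω, X ω)) inferInstance ≤ mΩ)
    -- the working outcome model `E[Y(a) | U, X] = τ(a, X)' g(U, X)`
    (hmodel : ∀ a : ℝ,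
      μ[Ypot a | MeasurableSpace.comap (fun ω => (U ω, X ω)) inferInstance]
        =ᵐ[μ] fun ω => τ a (X ω) ⬝ᵥ g (U ω) (X ω))
    -- conditional independence `Y(a) ⫫ Z | (U, X)`
    (hCIZ : ∀ a : ℝ, CondIndepFun
      (MeasurableSpace.comap (fun ω => (U ω, X ω)) inferInstance) hUXle (Ypot a) Z μ)
    -- integrability
    (hYpotint : ∀ a, Integrable (Ypot a) μ)
    (hgint : Integrable (fun ω => g (U ω) (X ω)) μ)
    (a₀ a₁ : ℝ) :
    (∀ a : ℝ,
      μ[Ypot a | MeasurableSpace.comap (fun ω => (Z ω, X ω)) inferInstance]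
        =ᵐ[μ] fun ω => τ a (X ω) ⬝ᵥ
          (μ[(fun ω' => g (U ω') (X ω')) |
            MeasurableSpace.comap (fun ω' => (Z ω', X ω')) inferInstance]) ω) ∧
    (μ[(fun ω => Ypot a₁ ω - Ypot a₀ ω) |
        MeasurableSpace.comap (fun ω => (Z ω, X ω)) inferInstance]
      =ᵐ[μ] fun ω => (τ a₁ (X ω) - τ a₀ (X ω)) ⬝ᵥ
        (μ[(fun ω' => g (U ω') (X ω')) |
          MeasurableSpace.comap (fun ω' => (Z ω', X ω')) inferInstance]) ω) :=
  stmt9_general (mΩ := mΩ) μ X U Z Ypot hX hZ hYpot g τ hUXle hmodel hCIZ hYpotint hgint a₀ a₁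
end

section
/- Let Y = ε_Y + g₀(U) + A g₁(U) with A ∈ {0,1}, E[ε_Y | U, Z, A] = 0, and potential outcomes Y(a) = ε_Y + g₀(U) + a g₁(U). Then the difference E[Y | Z, A=1] − E[Y | Z, A=0] equals E[g₁(U) | Z] plus the bias term E[h(U,Z) | Z, A=1] − E[h(U,Z) | Z, A=0], where h(U, Z) = g₀(U) + P(A = 0 | Z) g₁(U). -/
/-!
Write `P(s | Z) = E[1ₛ | Z]` and `h = g₀(U) + P(A = 0 | Z) g₁(U)`. On the arm `{A = a}`,
`Y - h = ε_Y + (a - P(A = 0 | Z)) g₁(U)`. Bayes' formula `P(s | Z) E[f | Z, s] = E[1ₛ f | Z]`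
turns conditional expectations within an arm into ones under the full measure, where the
`Z`-measurable factors pull out and the noise term vanishes because `{A = a}` is
`σ(U, Z, A)`-measurable. Dividing by `P(s | Z) > 0` gives
`E[Y - h | Z, A = 1] = E[1_{A=1} g₁(U) | Z]` and `E[Y - h | Z, A = 0] = -E[1_{A=0} g₁(U) | Z]`,
whose difference is `E[g₁(U) | Z]`. Positivity is also what makes a `Z`-measurable set that is
null given `A = a` null outright, so the arm-wise identities hold almost surely.
-/

open MeasureTheory ProbabilityTheory

section

variable {Ω : Type*} {m mΩ : MeasurableSpace Ω} {μ : Measure Ω} {s : Set Ω}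

lemma MeasureTheory.Integrable.cond {f : Ω → ℝ} (hf : Integrable f μ) : Integrable f μ[|s] := by
  by_cases hμs : μ s = 0
  · simp [cond_eq_zero_of_meas_eq_zero hμs]
  · exact hf.restrict.smul_measure (ENNReal.inv_ne_top.mpr hμs)

lemma setIntegral_cond (hs : MeasurableSet s) (t : Set Ω) (f : Ω → ℝ) :
    ∫ x in t, f x ∂μ[|s] = (μ.real s)⁻¹ * ∫ x in t ∩ s, f x ∂μ := by
  rw [ProbabilityTheory.cond, Measure.restrict_smul, integral_smul_measure,
    Measure.restrict_restrict' hs, ENNReal.toReal_inv, smul_eq_mul, measureReal_def]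

lemma setIntegral_mul_condExp (hm : m ≤ mΩ) [SigmaFinite (μ.trim hm)] {c f : Ω → ℝ}
    (hc : StronglyMeasurable[m] c) (hcf : Integrable (c * f) μ) (hf : Integrable f μ)
    {t : Set Ω} (ht : MeasurableSet[m] t) :
    ∫ x in t, c x * μ[f|m] x ∂μ = ∫ x in t, c x * f x ∂μ :=
  calc ∫ x in t, c x * μ[f|m] x ∂μ = ∫ x in t, μ[c * f|m] x ∂μ :=
        integral_congr_ae
          (ae_restrict_of_ae (condExp_mul_of_stronglyMeasurable_left hc hcf hf).symm)
    _ = ∫ x in t, c x * f x ∂μ := setIntegral_condExp hm hcf ht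

lemma abs_condExp_indicator_one_le : ∀ᵐ x ∂μ, |μ[s.indicator (1 : Ω → ℝ)|m] x| ≤ 1 := by
  refine ae_bdd_abs_condExp_of_ae_bdd_abs (Filter.Eventually.of_forall fun x => ?_)
  by_cases hx : x ∈ s <;> simp [hx]

variable [IsFiniteMeasure μ]

lemma measure_eq_zero_of_measure_inter_eq_zero (hm : m ≤ mΩ) (hs : MeasurableSet s)
    (hpos : ∀ᵐ x ∂μ, 0 < μ[s.indicator (1 : Ω → ℝ)|m] x) {t : Set Ω} (ht : MeasurableSet[m] t)
    (hts : μ (t ∩ s) = 0) : μ t = 0 := by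
  have hzero : ∫ x in t, μ[s.indicator (1 : Ω → ℝ)|m] x ∂μ = 0 := by
    rw [setIntegral_condExp hm ((integrable_const 1).indicator hs) ht, setIntegral_indicator hs,
      Pi.one_def, setIntegral_const]
    simp [measureReal_def, hts]
  have hvanish : μ[s.indicator (1 : Ω → ℝ)|m] =ᵐ[μ.restrict t] 0 :=
    (setIntegral_eq_zero_iff_of_nonneg_ae (ae_restrict_of_ae (hpos.mono fun _ hx => hx.le))
      integrable_condExp.integrableOn).mp hzero
  have hfalse : ∀ᵐ x ∂μ.restrict t, False := by
    filter_upwards [hvanish, ae_restrict_of_ae hpos] with x hx hx'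
    exact (hx ▸ hx').false
  rwa [Filter.eventually_false_iff_eq_bot, ae_eq_bot, Measure.restrict_eq_zero] at hfalse

lemma ae_eq_of_ae_eq_cond (hm : m ≤ mΩ) (hs : MeasurableSet s)
    (hpos : ∀ᵐ x ∂μ, 0 < μ[s.indicator (1 : Ω → ℝ)|m] x) {f g : Ω → ℝ}
    (hf : StronglyMeasurable[m] f) (hg : StronglyMeasurable[m] g) (hfg : f =ᵐ[μ[|s]] g) :
    f =ᵐ[μ] g := by
  refine measure_eq_zero_of_measure_inter_eq_zero hm hs hpos (hf.measurableSet_eq_fun hg).compl ?_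
  have hcond : μ[|s] {x | f x = g x}ᶜ = 0 := hfg
  rw [cond_apply hs, mul_eq_zero, ENNReal.inv_eq_zero] at hcond
  rw [Set.inter_comm]
  exact hcond.resolve_left (measure_ne_top μ s)

lemma setIntegral_inter_condExp_indicator (hm : m ≤ mΩ) (hs : MeasurableSet s) {f : Ω → ℝ}
    (hf : Integrable f μ) {t : Set Ω} (ht : MeasurableSet[m] t) :
    ∫ x in t ∩ s, μ[s.indicator f|m] x ∂μ =
      ∫ x in t ∩ s, μ[s.indicator (1 : Ω → ℝ)|m] x * f x ∂μ := by
  set q := μ[s.indicator (1 : Ω → ℝ)|m]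
  set G := μ[s.indicator f|m]
  have hq : StronglyMeasurable[m] q := stronglyMeasurable_condExp
  have hGs : Integrable (G * s.indicator 1) μ :=
    integrable_condExp.mul_bdd (stronglyMeasurable_const.indicator hs).aestronglyMeasurable
      (c := 1) (Filter.Eventually.of_forall fun x => by by_cases hx : x ∈ s <;> simp [hx])
  have hqfs : Integrable (q * s.indicator f) μ :=
    (hf.indicator hs).bdd_mul (hq.mono hm).aestronglyMeasurable abs_condExp_indicator_one_le
  calc ∫ x in t ∩ s, G x ∂μ = ∫ x in t, G x * s.indicator 1 x ∂μ := by
        rw [← setIntegral_indicator hs]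
        congr with x
        by_cases hx : x ∈ s <;> simp [hx]
    _ = ∫ x in t, G x * q x ∂μ :=
        (setIntegral_mul_condExp hm stronglyMeasurable_condExp hGs
          ((integrable_const 1).indicator hs) ht).symm
    _ = ∫ x in t, q x * s.indicator f x ∂μ := by
        simp_rw [mul_comm (G _)]
        exact setIntegral_mul_condExp hm hq hqfs (hf.indicator hs) ht
    _ = ∫ x in t ∩ s, q x * f x ∂μ := by
        rw [← setIntegral_indicator hs]
        congr with x
        by_cases hx : x ∈ s <;> simp [hx]

/-- Bayes' formula `E[f | m, s] = E[1ₛ f | m] / P(s | m)`, cleared of the denominator. -/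
lemma condExp_indicator_ae_eq_mul_condExp_cond (hm : m ≤ mΩ) (hs : MeasurableSet s)
    (hpos : ∀ᵐ x ∂μ, 0 < μ[s.indicator (1 : Ω → ℝ)|m] x) {f : Ω → ℝ} (hf : Integrable f μ) :
    μ[s.indicator f|m] =ᵐ[μ] μ[s.indicator (1 : Ω → ℝ)|m] * μ[|s][f|m] := by
  have hq : StronglyMeasurable[m] μ[s.indicator (1 : Ω → ℝ)|m] := stronglyMeasurable_condExp
  have hqf : Integrable (μ[s.indicator (1 : Ω → ℝ)|m] * f) μ :=
    hf.bdd_mul (hq.mono hm).aestronglyMeasurable abs_condExp_indicator_one_le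
  refine ae_eq_of_ae_eq_cond hm hs hpos stronglyMeasurable_condExp
    (hq.mul stronglyMeasurable_condExp) ?_
  refine (ae_eq_condExp_of_forall_setIntegral_eq hm hqf.cond
    (fun t _ _ => integrable_condExp.cond.integrableOn) (fun t ht _ => ?_)
    stronglyMeasurable_condExp.aestronglyMeasurable).trans
    (condExp_mul_of_stronglyMeasurable_left hq hqf.cond hf.cond)
  rw [setIntegral_cond hs, setIntegral_cond hs, setIntegral_inter_condExp_indicator hm hs hf ht]
  rfl

lemma condExp_indicator_ae_eq_zero_of_condExp_ae_eq_zero {m' : MeasurableSpace Ω} (hmm' : m ≤ m')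
    (hm' : m' ≤ mΩ) (hs : MeasurableSet[m'] s) {ε : Ω → ℝ} (hε : Integrable ε μ)
    (hε0 : μ[ε|m'] =ᵐ[μ] 0) : μ[s.indicator ε|m] =ᵐ[μ] 0 :=
  calc μ[s.indicator ε|m]
      =ᵐ[μ] μ[μ[s.indicator ε|m']|m] := (condExp_condExp_of_le hmm' hm').symm
    _ =ᵐ[μ] μ[s.indicator (μ[ε|m'])|m] := condExp_congr_ae (condExp_indicator hε hs)
    _ =ᵐ[μ] μ[0|m] := condExp_congr_ae
        (hε0.mono fun _ hx => Set.indicator_apply_eq_zero.mpr fun _ => hx)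
    _ = 0 := condExp_zero

lemma mul_condExp_cond_sub_ae_eq_mul_condExp_indicator (hm : m ≤ mΩ) (hs : MeasurableSet s)
    (hpos : ∀ᵐ x ∂μ, 0 < μ[s.indicator (1 : Ω → ℝ)|m] x) {Y h ε c g : Ω → ℝ}
    (hY : Integrable Y μ) (hh : Integrable h μ) (hε : Integrable ε μ) (hg : Integrable g μ)
    (hc : StronglyMeasurable[m] c) (hcg : Integrable (c * g) μ)
    (hε0 : μ[s.indicator ε|m] =ᵐ[μ] 0) (hYh : ∀ x ∈ s, Y x = h x + ε x + c x * g x) :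
    μ[s.indicator (1 : Ω → ℝ)|m] * (μ[|s][Y|m] - μ[|s][h|m]) =ᵐ[μ] c * μ[s.indicator g|m] := by
  have hcgs : Integrable (c * s.indicator g) μ :=
    (hcg.indicator hs).congr (Filter.Eventually.of_forall fun x => by
      by_cases hx : x ∈ s <;> simp [hx])
  calc μ[s.indicator (1 : Ω → ℝ)|m] * (μ[|s][Y|m] - μ[|s][h|m])
      = μ[s.indicator (1 : Ω → ℝ)|m] * μ[|s][Y|m] -
          μ[s.indicator (1 : Ω → ℝ)|m] * μ[|s][h|m] := mul_sub _ _ _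
    _ =ᵐ[μ] μ[s.indicator Y|m] - μ[s.indicator h|m] :=
        (condExp_indicator_ae_eq_mul_condExp_cond hm hs hpos hY).symm.sub
          (condExp_indicator_ae_eq_mul_condExp_cond hm hs hpos hh).symm
    _ =ᵐ[μ] μ[s.indicator Y - s.indicator h|m] :=
        (condExp_sub (hY.indicator hs) (hh.indicator hs) m).symm
    _ = μ[s.indicator ε + c * s.indicator g|m] := by
        congr 1
        ext x
        by_cases hx : x ∈ s
        · simp [hx, hYh x hx]
          ring
        · simp [hx]
    _ =ᵐ[μ] μ[s.indicator ε|m] + μ[c * s.indicator g|m] := condExp_add (hε.indicator hs) hcgs m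
    _ =ᵐ[μ] 0 + c * μ[s.indicator g|m] :=
        hε0.add (condExp_mul_of_stronglyMeasurable_left hc hcgs (hg.indicator hs))
    _ = c * μ[s.indicator g|m] := zero_add _

lemma condExp_indicator_compl_add_condExp_indicator (hm : m ≤ mΩ) (hs : MeasurableSet s) :
    μ[sᶜ.indicator (1 : Ω → ℝ)|m] + μ[s.indicator (1 : Ω → ℝ)|m] =ᵐ[μ] 1 :=
  calc _ =ᵐ[μ] μ[sᶜ.indicator (1 : Ω → ℝ) + s.indicator 1|m] :=
        (condExp_add ((integrable_const 1).indicator hs.compl)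
          ((integrable_const 1).indicator hs) m).symm
    _ = 1 := by rw [add_comm, Set.indicator_self_add_compl]; exact condExp_const hm 1

lemma condExp_cond_sub_condExp_cond_compl_ae_eq (hm : m ≤ mΩ) (hs : MeasurableSet s)
    (hpos : ∀ᵐ x ∂μ, 0 < μ[s.indicator (1 : Ω → ℝ)|m] x ∧ μ[s.indicator (1 : Ω → ℝ)|m] x < 1)
    {Y ε g₀ g₁ : Ω → ℝ} (hY : Integrable Y μ) (hε : Integrable ε μ) (hg₀ : Integrable g₀ μ)
    (hg₁ : Integrable g₁ μ) (hε₁ : μ[s.indicator ε|m] =ᵐ[μ] 0)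
    (hε₀ : μ[sᶜ.indicator ε|m] =ᵐ[μ] 0) (hY₁ : ∀ x ∈ s, Y x = ε x + g₀ x + g₁ x)
    (hY₀ : ∀ x ∈ sᶜ, Y x = ε x + g₀ x) :
    ∀ᵐ ω ∂μ, μ[|s][Y|m] ω - μ[|sᶜ][Y|m] ω = μ[g₁|m] ω +
      (μ[|s][fun x => g₀ x + μ[sᶜ.indicator (1 : Ω → ℝ)|m] x * g₁ x|m] ω -
        μ[|sᶜ][fun x => g₀ x + μ[sᶜ.indicator (1 : Ω → ℝ)|m] x * g₁ x|m] ω) := by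
  have hp : StronglyMeasurable[m] μ[sᶜ.indicator (1 : Ω → ℝ)|m] := stronglyMeasurable_condExp
  have hpg : Integrable (μ[sᶜ.indicator (1 : Ω → ℝ)|m] * g₁) μ :=
    hg₁.bdd_mul (hp.mono hm).aestronglyMeasurable abs_condExp_indicator_one_le
  have hh : Integrable (fun x => g₀ x + μ[sᶜ.indicator (1 : Ω → ℝ)|m] x * g₁ x) μ :=
    hg₀.add hpg
  have hpq := condExp_indicator_compl_add_condExp_indicator (μ := μ) hm hs
  have hp_pos : ∀ᵐ x ∂μ, 0 < μ[sᶜ.indicator (1 : Ω → ℝ)|m] x := by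
    filter_upwards [hpos, hpq] with x hx hpqx
    simp only [Pi.add_apply, Pi.one_apply] at hpqx
    linarith [hx.2]
  have h₁ := mul_condExp_cond_sub_ae_eq_mul_condExp_indicator hm hs (hpos.mono fun _ hx => hx.1)
    hY hh hε hg₁ (stronglyMeasurable_one.sub hp)
    ((hg₁.sub hpg).congr (Filter.Eventually.of_forall fun x => by
      simp only [Pi.sub_apply, Pi.mul_apply, Pi.one_apply]; ring))
    hε₁ (fun x hx => by simp only [hY₁ x hx, Pi.sub_apply, Pi.one_apply]; ring)
  have h₀ := mul_condExp_cond_sub_ae_eq_mul_condExp_indicator hm hs.compl hp_pos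
    hY hh hε hg₁ hp.neg (hpg.neg.congr (Filter.Eventually.of_forall fun x => by
      simp only [Pi.neg_apply, Pi.mul_apply]; ring))
    hε₀ (fun x hx => by simp only [hY₀ x hx, Pi.neg_apply]; ring)
  have hsplit : μ[g₁|m] =ᵐ[μ] μ[s.indicator g₁|m] + μ[sᶜ.indicator g₁|m] := by
    conv_lhs => rw [← Set.indicator_self_add_compl s g₁]
    exact condExp_add (hg₁.indicator hs) (hg₁.indicator hs.compl) m
  filter_upwards [hpos, hp_pos, hpq, h₁, h₀, hsplit] with ω hqω hpω hpqω h₁ω h₀ω hsplitω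
  simp only [Pi.add_apply, Pi.sub_apply, Pi.mul_apply, Pi.neg_apply, Pi.one_apply] at *
  have e₁ : μ[|s][Y|m] ω - μ[|s][fun x => g₀ x + μ[sᶜ.indicator (1 : Ω → ℝ)|m] x * g₁ x|m] ω =
      μ[s.indicator g₁|m] ω :=
    mul_left_cancel₀ hqω.1.ne' (by linear_combination h₁ω - μ[s.indicator g₁|m] ω * hpqω)
  have e₀ : μ[|sᶜ][Y|m] ω - μ[|sᶜ][fun x => g₀ x + μ[sᶜ.indicator (1 : Ω → ℝ)|m] x * g₁ x|m] ω =
      -μ[sᶜ.indicator g₁|m] ω :=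
    mul_left_cancel₀ hpω.ne' (by linear_combination h₀ω)
  linear_combination e₁ - e₀ - hsplitω

end

theorem stmt10_general {Ω : Type*} [mΩ : MeasurableSpace Ω]
    (μ : Measure Ω) [IsProbabilityMeasure μ]
    {k p : ℕ} (U : Ω → Fin k → ℝ) (Z : Ω → Fin p → ℝ) (A : Ω → ℝ) (εY : Ω → ℝ)
    (hU : Measurable U) (hZ : Measurable Z) (hA : Measurable A)
    (g₀ g₁ : (Fin k → ℝ) → ℝ)
    -- `A` is binary
    (hbin : ∀ ω, A ω = 0 ∨ A ω = 1)
    -- mean-zero noise: `E[ε_Y | U, Z, A] = 0`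
    (hnoise : μ[εY | MeasurableSpace.comap (fun ω => (U ω, Z ω, A ω)) inferInstance]
      =ᵐ[μ] 0)
    -- the outcome and potential outcomes
    (Y : Ω → ℝ) (hY : ∀ ω, Y ω = εY ω + g₀ (U ω) + A ω * g₁ (U ω))
    -- positivity: `0 < P(A = 1 | Z) < 1` a.s.
    (hpos : ∀ᵐ ω ∂μ,
      0 < (μ[(fun ω' => if A ω' = 1 then (1 : ℝ) else 0) |
            MeasurableSpace.comap Z inferInstance]) ω ∧
      (μ[(fun ω' => if A ω' = 1 then (1 : ℝ) else 0) |
            MeasurableSpace.comap Z inferInstance]) ω < 1)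
    -- integrability
    (hint : Integrable Y μ) (hg₀int : Integrable (fun ω => g₀ (U ω)) μ)
    (hg₁int : Integrable (fun ω => g₁ (U ω)) μ) :
    ∀ᵐ ω ∂μ,
      ((μ[|{ω' | A ω' = 1}])[Y | MeasurableSpace.comap Z inferInstance]) ω -
        ((μ[|{ω' | A ω' = 0}])[Y | MeasurableSpace.comap Z inferInstance]) ω =
      (μ[(fun ω' => g₁ (U ω')) | MeasurableSpace.comap Z inferInstance]) ω +
        (((μ[|{ω' | A ω' = 1}])[(fun ω' => g₀ (U ω') +
            (μ[(fun ω'' => if A ω'' = 0 then (1 : ℝ) else 0) |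
              MeasurableSpace.comap Z inferInstance]) ω' * g₁ (U ω')) |
            MeasurableSpace.comap Z inferInstance]) ω -
          ((μ[|{ω' | A ω' = 0}])[(fun ω' => g₀ (U ω') +
            (μ[(fun ω'' => if A ω'' = 0 then (1 : ℝ) else 0) |
              MeasurableSpace.comap Z inferInstance]) ω' * g₁ (U ω')) |
            MeasurableSpace.comap Z inferInstance]) ω) := by
  have hUZA : Measurable (fun ω => (U ω, Z ω, A ω)) := hU.prodMk (hZ.prodMk hA)
  have hZ' : Measurable[MeasurableSpace.comap (fun ω => (U ω, Z ω, A ω)) inferInstance] Z :=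
    (measurable_fst.comp measurable_snd).comp (Measurable.of_comap_le le_rfl)
  have hA' : Measurable[MeasurableSpace.comap (fun ω => (U ω, Z ω, A ω)) inferInstance] A :=
    (measurable_snd.comp measurable_snd).comp (Measurable.of_comap_le le_rfl)
  have hs := hA' (measurableSet_singleton 1)
  have hind : ∀ a : ℝ, (fun ω => if A ω = a then (1 : ℝ) else 0) = {ω | A ω = a}.indicator 1 :=
    fun a => by ext ω; by_cases h : A ω = a <;> simp [h]
  have hcompl : {ω | A ω = 0} = {ω | A ω = 1}ᶜ := by
    ext ω; rcases hbin ω with h | h <;> simp [h]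
  rw [hind 1] at hpos
  rw [hind 0, hcompl]
  have hAg₁ : Integrable (fun ω => A ω * g₁ (U ω)) μ :=
    hg₁int.bdd_mul (c := 1) hA.aestronglyMeasurable (Filter.Eventually.of_forall fun ω => by
      rcases hbin ω with h | h <;> simp [h])
  have hεY : Integrable εY μ :=
    ((hint.sub hg₀int).sub hAg₁).congr (Filter.Eventually.of_forall fun ω => by
      simp only [Pi.sub_apply, hY ω]; ring)
  have hε₁ := condExp_indicator_ae_eq_zero_of_condExp_ae_eq_zero hZ'.comap_le hUZA.comap_le
    hs hεY hnoise
  have hε₀ := condExp_indicator_ae_eq_zero_of_condExp_ae_eq_zero hZ'.comap_le hUZA.comap_le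
    hs.compl hεY hnoise
  exact condExp_cond_sub_condExp_cond_compl_ae_eq hZ.comap_le (hUZA.comap_le _ hs) hpos hint hεY
    hg₀int hg₁int hε₁ hε₀ (fun ω hω => by rw [hY ω, hω]; ring)
    (fun ω hω => by rw [hY ω, (hbin ω).resolve_right hω]; ring)

/-- Let `Y = ε_Y + g₀(U) + A g₁(U)` with `A ∈ {0,1}`, `E[ε_Y | U, Z, A] = 0`, and potential
outcomes `Y(a) = ε_Y + g₀(U) + a g₁(U)`. Then `E[Y | Z, A=1] − E[Y | Z, A=0]` equals the
true CATE `E[g₁(U) | Z]` plus the bias term `E[h(U,Z) | Z, A=1] − E[h(U,Z) | Z, A=0]`,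
where `h(U, Z) = g₀(U) + P(A = 0 | Z) g₁(U)`. -/
theorem stmt10 {Ω : Type*} [mΩ : MeasurableSpace Ω]
    (μ : Measure Ω) [IsProbabilityMeasure μ]
    {k p : ℕ} (U : Ω → Fin k → ℝ) (Z : Ω → Fin p → ℝ) (A : Ω → ℝ) (εY : Ω → ℝ)
    (hU : Measurable U) (hZ : Measurable Z) (hA : Measurable A) (hεY : Measurable εY)
    (g₀ g₁ : (Fin k → ℝ) → ℝ) (hg₀ : Measurable g₀) (hg₁ : Measurable g₁)
    -- `A` is binary
    (hbin : ∀ ω, A ω = 0 ∨ A ω = 1)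
    -- mean-zero noise: `E[ε_Y | U, Z, A] = 0`
    (hnoise : μ[εY | MeasurableSpace.comap (fun ω => (U ω, Z ω, A ω)) inferInstance]
      =ᵐ[μ] 0)
    -- the outcome and potential outcomes
    (Y : Ω → ℝ) (hY : ∀ ω, Y ω = εY ω + g₀ (U ω) + A ω * g₁ (U ω))
    (Ypot : ℝ → Ω → ℝ) (hYpot : ∀ a ω, Ypot a ω = εY ω + g₀ (U ω) + a * g₁ (U ω))
    -- positivity: `0 < P(A = 1 | Z) < 1` a.s.
    (hpos : ∀ᵐ ω ∂μ,
      0 < (μ[(fun ω' => if A ω' = 1 then (1 : ℝ) else 0) |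
            MeasurableSpace.comap Z inferInstance]) ω ∧
      (μ[(fun ω' => if A ω' = 1 then (1 : ℝ) else 0) |
            MeasurableSpace.comap Z inferInstance]) ω < 1)
    -- integrability
    (hint : Integrable Y μ) (hg₀int : Integrable (fun ω => g₀ (U ω)) μ)
    (hg₁int : Integrable (fun ω => g₁ (U ω)) μ) :
    ∀ᵐ ω ∂μ,
      ((μ[|{ω' | A ω' = 1}])[Y | MeasurableSpace.comap Z inferInstance]) ω -
        ((μ[|{ω' | A ω' = 0}])[Y | MeasurableSpace.comap Z inferInstance]) ω =
      (μ[(fun ω' => g₁ (U ω')) | MeasurableSpace.comap Z inferInstance]) ω +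
        (((μ[|{ω' | A ω' = 1}])[(fun ω' => g₀ (U ω') +
            (μ[(fun ω'' => if A ω'' = 0 then (1 : ℝ) else 0) |
              MeasurableSpace.comap Z inferInstance]) ω' * g₁ (U ω')) |
            MeasurableSpace.comap Z inferInstance]) ω -
          ((μ[|{ω' | A ω' = 0}])[(fun ω' => g₀ (U ω') +
            (μ[(fun ω'' => if A ω'' = 0 then (1 : ℝ) else 0) |
              MeasurableSpace.comap Z inferInstance]) ω' * g₁ (U ω')) |
            MeasurableSpace.comap Z inferInstance]) ω) :=
  stmt10_general (mΩ := mΩ) μ U Z A εY hU hZ hA g₀ g₁ hbin hnoise Y hY hpos hint hg₀int hg₁int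
end
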